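/- arXiv:2212.00961 — 3 statements merged into one kernel-verified Lean document; each statement's English description precedes it below -/
import Mathlib

section
/- Let G be a finite directed tree (connected acyclic graph with an orientation on each edge) with a nonzero balanced flow assignment f on the edges, i.e., for each vertex the sum of flows on incoming edges minus the sum on outgoing edges equals the net withdrawal at that vertex, and the net injections/withdrawals sum to zero with at least one nonzero. Then there exists a vertex with strictly positive net injection such that every incident edge with nonzero flow carries flow directed away from that vertex, and there exists a vertex with strictly positive net withdrawal such that every incident edge with nonzero flow carries flow directed toward that vertex. -/
open SimpleGraph Relation

section Aux
variable {V : Type*}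

private lemma tfss_dart_split {G : SimpleGraph V} {a b : V} (d : G.Dart) :
    ∀ (p : G.Walk a b), d ∈ p.darts →
      ∃ q : G.Walk d.snd b, q.length < p.length ∧ ∀ d' ∈ q.darts, d' ∈ p.darts := by
  intro p
  induction p with
  | nil => simp
  | cons h p ih =>
    intro hd
    rw [SimpleGraph.Walk.darts_cons, List.mem_cons] at hd
    rcases hd with h' | h'
    · subst h'
      exact ⟨p, by simp, fun d' hd' => by simp [SimpleGraph.Walk.darts_cons, hd']⟩
    · obtain ⟨q, hq1, hq2⟩ := ih h'
      refine ⟨q, by simp; omega, fun d' hd' => ?_⟩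
      simp only [SimpleGraph.Walk.darts_cons, List.mem_cons]
      exact Or.inr (hq2 d' hd')

private lemma tfss_no_rwalk {G : SimpleGraph V} (hA : G.IsAcyclic)
    {r : V → V → Prop} (hr : ∀ u v, r u v → G.Adj u v)
    (hasym : ∀ u v, r u v → ¬ r v u) :
    ∀ n {u v : V}, r u v → ∀ p : G.Walk v u, (∀ d ∈ p.darts, r d.fst d.snd) →
      p.length ≤ n → False := by
  intro n
  induction n using Nat.strong_induction_on with
  | _ n ih =>
    intro u v huv p hp hlen
    have hadj := hr u v huv
    have hbridge : G.IsBridge s(u, v) := (isAcyclic_iff_forall_adj_isBridge.mp hA) hadj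
    have hedge : s(u, v) ∈ p.edges := by
      by_contra hne
      have hreach : (G \ SimpleGraph.fromEdgeSet {s(u,v)}).Reachable u v := by
        rw [show G \ SimpleGraph.fromEdgeSet {s(u,v)} = G.deleteEdges {s(u,v)} from rfl, SimpleGraph.reachable_delete_edges_iff_exists_walk]
        exact ⟨p.reverse, by rwa [SimpleGraph.Walk.edges_reverse, List.mem_reverse]⟩
      exact (SimpleGraph.isBridge_iff.mp hbridge) hreach
    rw [SimpleGraph.Walk.edges, List.mem_map] at hedge
    obtain ⟨d, hd, hde⟩ := hedge
    rcases SimpleGraph.dart_edge_eq_mk'_iff'.mp hde with ⟨h1, h2⟩ | ⟨h1, h2⟩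
    · -- d.fst = u, d.snd = v : split and recurse
      subst h2
      obtain ⟨q, hq1, hq2⟩ := tfss_dart_split d p hd
      have hql : q.length < n := lt_of_lt_of_le hq1 hlen
      exact ih q.length hql huv q (fun d' hd' => hp d' (hq2 d' hd')) le_rfl
    · -- d.fst = v, d.snd = u : r v u, contradicting asymmetry
      have := hp d hd
      rw [h1, h2] at this
      exact hasym u v huv this

private lemma tfss_rtg_walk {G : SimpleGraph V} {r : V → V → Prop}
    (hr : ∀ u v, r u v → G.Adj u v) {a b : V} (h : ReflTransGen r a b) :
    ∃ p : G.Walk a b, ∀ d ∈ p.darts, r d.fst d.snd := by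
  induction h with
  | refl => exact ⟨SimpleGraph.Walk.nil, by simp⟩
  | tail hab hbc ih =>
    obtain ⟨p, hp⟩ := ih
    refine ⟨p.concat (hr _ _ hbc), fun d hd => ?_⟩
    rw [SimpleGraph.Walk.darts_concat, List.concat_eq_append, List.mem_append] at hd
    rcases hd with hd | hd
    · exact hp d hd
    · rw [List.mem_singleton] at hd; subst hd; exact hbc

private lemma tfss_no_loop {G : SimpleGraph V} (hA : G.IsAcyclic) {r : V → V → Prop}
    (hr : ∀ u v, r u v → G.Adj u v) (hasym : ∀ u v, r u v → ¬ r v u)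
    {x : V} : ¬ TransGen r x x := by
  intro h
  obtain ⟨y, hxy, hyx⟩ := Relation.TransGen.tail'_iff.mp h
  obtain ⟨p, hp⟩ := tfss_rtg_walk hr hxy
  exact tfss_no_rwalk hA hr hasym p.length hyx p hp le_rfl

end Aux
private lemma tfss_source_exists {V : Type*} [Fintype V] (G : SimpleGraph V)
    (hT : G.IsTree) (flow : V → V → ℝ)
    (hskew : ∀ u v, flow u v = -flow v u)
    (hsupp : ∀ u v, ¬ G.Adj u v → flow u v = 0)
    (q : V → ℝ) (hq : ∀ v, q v = ∑ u, flow v u)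
    (hbal : ∑ v, q v = 0) (hqne : ∃ v, q v ≠ 0) :
    ∃ v, 0 < q v ∧ ∀ u, 0 ≤ flow v u := by
  classical
  set r : V → V → Prop := fun a b => 0 < flow a b with hrdef
  have hr : ∀ a b, r a b → G.Adj a b := by
    intro a b hab
    by_contra hna
    have h : (0:ℝ) < flow a b := hab
    rw [hsupp a b hna] at h
    exact lt_irrefl 0 h
  have hasym : ∀ a b, r a b → ¬ r b a := by
    intro a b hab hba
    have := hskew a b
    simp only [hrdef] at hab hba
    linarith
  -- there is a vertex with positive injection
  have hpos : ∃ v, 0 < q v := by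
    by_contra hno
    push_neg at hno
    obtain ⟨v0, hv0⟩ := hqne
    exact hv0 ((Finset.sum_eq_zero_iff_of_nonpos (fun i _ => hno i)).mp hbal v0 (Finset.mem_univ v0))
  by_contra hcon
  push_neg at hcon
  -- every positive-q vertex has an incoming positive flow
  have hcon' : ∀ x, 0 < q x → ∃ u, flow x u < 0 := by
    intro x hx
    exact hcon x hx
  -- step lemma
  have hstep : ∀ x y, flow y x < 0 → ∃ u, flow x u < 0 := by
    intro x y hyx
    by_contra hall
    push_neg at hall
    have hxy : 0 < flow x y := by have := hskew x y; linarith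
    have hqx : 0 < q x := by
      rw [hq]
      calc (0:ℝ) < flow x y := hxy
        _ ≤ ∑ u, flow x u :=
          Finset.single_le_sum (fun i _ => hall i) (Finset.mem_univ y)
    obtain ⟨u, hu⟩ := hcon' x hqx
    exact absurd (hall u) (not_le.mpr hu)
  obtain ⟨x0, hx0⟩ := hpos
  -- build an infinite backwards chain
  let g : {x : V // ∃ u, flow x u < 0} → {x : V // ∃ u, flow x u < 0} :=
    fun s => ⟨Classical.choose s.2, hstep _ s.1 (Classical.choose_spec s.2)⟩
  have hg : ∀ s : {x : V // ∃ u, flow x u < 0}, r (g s).1 s.1 := by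
    intro s
    have h1 := Classical.choose_spec s.2
    have h2 := hskew s.1 (Classical.choose s.2)
    simp only [hrdef, g]
    linarith
  let c : ℕ → {x : V // ∃ u, flow x u < 0} := fun n => g^[n] ⟨x0, hcon' x0 hx0⟩
  have hchain : ∀ n, r (c (n+1)).1 (c n).1 := by
    intro n
    have : c (n+1) = g (c n) := Function.iterate_succ_apply' g n _
    rw [this]
    exact hg (c n)
  have htg : ∀ m k : ℕ, Relation.TransGen r (c (m + k + 1)).1 (c m).1 := by
    intro m k
    induction k with
    | zero => exact Relation.TransGen.single (hchain m)
    | succ k ih => exact Relation.TransGen.head (hchain (m + k + 1)) ih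
  obtain ⟨i, j, hne, heq⟩ := Finite.exists_ne_map_eq_of_infinite (fun n => (c n).1)
  rcases hne.lt_or_gt with hij | hij
  · have := htg i (j - i - 1)
    rw [show i + (j - i - 1) + 1 = j by omega, heq] at this
    exact tfss_no_loop hT.IsAcyclic hr hasym this
  · have := htg j (i - j - 1)
    rw [show j + (i - j - 1) + 1 = i by omega, ← heq] at this
    exact tfss_no_loop hT.IsAcyclic hr hasym this

/-- In a finite tree carrying a nonzero balanced flow, there is a vertex with
strictly positive net injection all of whose incident nonzero flows are directed
away from it, and a vertex with strictly positive net withdrawal all of whose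
incident nonzero flows are directed toward it.  The flow is encoded as a
skew-symmetric function `flow`, supported on the edges of the tree; the net
injection at `v` is `∑ u, flow v u` (flow leaving minus flow entering). -/
theorem tree_flow_source_sink {V : Type*} [Fintype V] (G : SimpleGraph V)
    (hT : G.IsTree) (flow : V → V → ℝ)
    (hskew : ∀ u v, flow u v = -flow v u)
    (hsupp : ∀ u v, ¬ G.Adj u v → flow u v = 0)
    (hnonzero : ∃ u v, flow u v ≠ 0)
    (q : V → ℝ) (hq : ∀ v, q v = ∑ u, flow v u)
    (hbal : ∑ v, q v = 0) (hqne : ∃ v, q v ≠ 0) :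
    (∃ v, 0 < q v ∧ ∀ u, 0 ≤ flow v u) ∧
      (∃ w, q w < 0 ∧ ∀ u, flow w u ≤ 0) := by
  constructor
  · exact tfss_source_exists G hT flow hskew hsupp q hq hbal hqne
  · obtain ⟨w, hw1, hw2⟩ := tfss_source_exists G hT (fun a b => -flow a b)
      (fun u v => congrArg Neg.neg (hskew u v))
      (fun u v h => by rw [hsupp u v h, neg_zero])
      (fun v => -q v)
      (fun v => by rw [hq v]; exact (Finset.sum_neg_distrib _).symm)
      (by rw [Finset.sum_neg_distrib, hbal, neg_zero])
      (by obtain ⟨v, hv⟩ := hqne; exact ⟨v, neg_ne_zero.mpr hv⟩)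
    exact ⟨w, by linarith, fun u => by have := hw2 u; linarith⟩
end

section
/- Consider a finite directed tree network with a single slack node and given injection/withdrawal boundary data. Suppose edge flows f are uniquely determined (nonzero on every edge) and that concentrations satisfy: each edge's concentration equals the nodal concentration of its upstream vertex, each injection node's nodal concentration is obtained by flow-weighted mixing of incoming edge concentrations with its specified injection concentration, and the slack node's concentration equals its specified injection concentration. Then the nodal and edge concentrations are unique: if two concentration assignments γ¹, γ² both satisfy these equations with the same flows, then γ¹ = γ². -/
/-- Uniqueness of concentrations on a tree network with a single slack node `s`.
Flows are skew-symmetric, supported on tree edges, nonzero on every edge, and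
balanced against nonnegative injections `qs` and withdrawals `qw`.  A nodal
concentration assignment `η` satisfies the slack condition `η s = ηs s` and the
flow-weighted mixing equation at every other node, where the concentration of an
edge equals the nodal concentration of its upstream vertex.  Any two such
assignments coincide, on nodes and on edges. -/
theorem tree_concentration_unique {V : Type*} [Fintype V] (G : SimpleGraph V)
    (hT : G.IsTree) (flow : V → V → ℝ)
    (hskew : ∀ u v, flow u v = -flow v u)
    (hsupp : ∀ u v, ¬ G.Adj u v → flow u v = 0)
    (hne : ∀ u v, G.Adj u v → flow u v ≠ 0)
    (s : V) (qs qw ηs : V → ℝ)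
    (hqs : ∀ i, 0 ≤ qs i) (hqw : ∀ i, 0 ≤ qw i)
    (hbal : ∀ i, i ≠ s → ∑ u, flow i u = qs i - qw i)
    (η1 η2 : V → ℝ)
    (hslack1 : η1 s = ηs s) (hslack2 : η2 s = ηs s)
    (hmix1 : ∀ i, i ≠ s →
      η1 i * ((∑ u, if 0 < flow u i then flow u i else 0) + qs i) =
        (∑ u, if 0 < flow u i then η1 u * flow u i else 0) + ηs i * qs i)
    (hmix2 : ∀ i, i ≠ s →
      η2 i * ((∑ u, if 0 < flow u i then flow u i else 0) + qs i) =
        (∑ u, if 0 < flow u i then η2 u * flow u i else 0) + ηs i * qs i) :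
    η1 = η2 ∧
      ∀ u v, G.Adj u v →
        (if 0 < flow u v then η1 u else η1 v) =
          (if 0 < flow u v then η2 u else η2 v) := by
  classical
  obtain ⟨g, hg⟩ : ∃ g : V → V → ℝ, ∀ u v, g u v = if 0 < flow u v then flow u v else 0 :=
    ⟨_, fun _ _ => rfl⟩
  obtain ⟨δ, hδ⟩ : ∃ δ : V → ℝ, ∀ i, δ i = η1 i - η2 i := ⟨_, fun _ => rfl⟩
  have hgnn : ∀ u v, 0 ≤ g u v := by
    intro u v
    by_cases h : 0 < flow u v
    · rw [hg, if_pos h]; linarith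
    · rw [hg, if_neg h]
  have hδs : δ s = 0 := by rw [hδ, hslack1, hslack2]; ring
  have hflow : ∀ u v, flow u v = g u v - g v u := by
    intro u v
    rcases lt_trichotomy (flow u v) 0 with h | h | h
    · have h' : 0 < flow v u := by rw [hskew]; linarith
      rw [hg, hg, if_neg (by linarith), if_pos h', hskew v u]; ring
    · have h' : ¬ 0 < flow v u := by rw [hskew]; linarith
      rw [hg, hg, if_neg (by linarith), if_neg h', h]; ring
    · have h' : ¬ 0 < flow v u := by rw [hskew]; linarith
      rw [hg, hg, if_pos h, if_neg h']; ring
  -- mixing equation for the difference δ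
  have hE : ∀ i, i ≠ s → δ i * ((∑ u, g u i) + qs i) = ∑ u, δ u * g u i := by
    intro i hi
    have h1 := hmix1 i hi
    have h2 := hmix2 i hi
    have r0 : (∑ u, if 0 < flow u i then flow u i else 0) = ∑ u, g u i :=
      Finset.sum_congr rfl fun u _ => (hg u i).symm
    have r1 : (∑ u, if 0 < flow u i then η1 u * flow u i else 0) = ∑ u, η1 u * g u i := by
      refine Finset.sum_congr rfl fun u _ => ?_
      rw [hg]; split_ifs <;> simp
    have r2 : (∑ u, if 0 < flow u i then η2 u * flow u i else 0) = ∑ u, η2 u * g u i := by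
      refine Finset.sum_congr rfl fun u _ => ?_
      rw [hg]; split_ifs <;> simp
    rw [r0, r1] at h1
    rw [r0, r2] at h2
    have hsum : ∑ u, δ u * g u i = (∑ u, η1 u * g u i) - (∑ u, η2 u * g u i) := by
      rw [← Finset.sum_sub_distrib]
      exact Finset.sum_congr rfl fun u _ => by rw [hδ]; ring
    rw [hsum, hδ]
    linear_combination h1 - h2
  -- balance in terms of g
  have hbalg : ∀ u, u ≠ s → (∑ i, g u i) = (∑ i, g i u) + qs u - qw u := by
    intro u hu
    have hb := hbal u hu
    have : ∑ i, (g u i - g i u) = qs u - qw u := by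
      rw [← hb]
      exact Finset.sum_congr rfl fun i _ => (hflow u i).symm
    rw [Finset.sum_sub_distrib] at this
    linarith
  set E : Finset V := Finset.univ.erase s with hE_def
  -- expand the local energy
  have hinner : ∀ i, i ≠ s → ∑ u, g u i * (δ u - δ i) ^ 2
      = (∑ u, g u i * δ u ^ 2) - δ i ^ 2 * ((∑ u, g u i) + qs i - qw i - g i s)
        - δ i ^ 2 * (qs i + qw i + g i s) := by
    intro i hi
    have hEi := hE i hi
    have expand : ∑ u, g u i * (δ u - δ i) ^ 2
        = (∑ u, g u i * δ u ^ 2) - 2 * δ i * (∑ u, δ u * g u i)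
          + δ i ^ 2 * (∑ u, g u i) := by
      rw [Finset.mul_sum, Finset.mul_sum, ← Finset.sum_sub_distrib, ← Finset.sum_add_distrib]
      exact Finset.sum_congr rfl fun u _ => by ring
    rw [expand, ← hEi]; ring
  -- swap the double sum
  have hswap : ∑ i ∈ E, ∑ u, g u i * δ u ^ 2
      = ∑ u ∈ E, δ u ^ 2 * ((∑ i, g u i) - g u s) := by
    rw [Finset.sum_comm]
    have : ∀ u : V, ∑ i ∈ E, g u i * δ u ^ 2 = δ u ^ 2 * ((∑ i, g u i) - g u s) := by
      intro u
      have hers : ∑ i ∈ E, g u i + g u s = ∑ i, g u i :=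
        Finset.sum_erase_add Finset.univ _ (Finset.mem_univ s)
      rw [← Finset.sum_mul]
      rw [show (∑ i ∈ E, g u i) = (∑ i, g u i) - g u s by linarith]
      ring
    rw [Finset.sum_congr rfl fun u _ => this u]
    symm
    apply Finset.sum_subset (Finset.subset_univ E)
    intro u _ hu
    have : u = s := by
      by_contra h
      exact hu (Finset.mem_erase.mpr ⟨h, Finset.mem_univ u⟩)
    rw [this, hδs]; ring
  -- the key identity: a sum of nonnegative terms equals zero
  have key : ∑ i ∈ E, ((∑ u, g u i * (δ u - δ i) ^ 2) + δ i ^ 2 * (qs i + qw i + g i s)) = 0 := by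
    have t1 : ∑ i ∈ E, ((∑ u, g u i * (δ u - δ i) ^ 2) + δ i ^ 2 * (qs i + qw i + g i s))
        = ∑ i ∈ E, ((∑ u, g u i * δ u ^ 2)
            - δ i ^ 2 * ((∑ u, g u i) + qs i - qw i - g i s)) := by
      refine Finset.sum_congr rfl fun i hi => ?_
      have hi' : i ≠ s := Finset.ne_of_mem_erase hi
      rw [hinner i hi']; ring
    rw [t1, Finset.sum_sub_distrib, hswap, sub_eq_zero]
    refine Finset.sum_congr rfl fun i hi => ?_
    have hi' : i ≠ s := Finset.ne_of_mem_erase hi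
    rw [hbalg i hi']
  -- each term is nonnegative, hence zero
  have hterm : ∀ i ∈ E, ((∑ u, g u i * (δ u - δ i) ^ 2) + δ i ^ 2 * (qs i + qw i + g i s)) = 0 := by
    refine (Finset.sum_eq_zero_iff_of_nonneg ?_).mp key
    intro i _
    have hA : 0 ≤ ∑ u, g u i * (δ u - δ i) ^ 2 :=
      Finset.sum_nonneg fun u _ => mul_nonneg (hgnn u i) (sq_nonneg _)
    have hB : 0 ≤ δ i ^ 2 * (qs i + qw i + g i s) :=
      mul_nonneg (sq_nonneg _) (by have := hqs i; have := hqw i; have := hgnn i s; linarith)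
    linarith
  have hAB : ∀ i, i ≠ s → (∀ u, g u i * (δ u - δ i) ^ 2 = 0) ∧
      δ i ^ 2 * (qs i + qw i + g i s) = 0 := by
    intro i hi
    have hmem : i ∈ E := Finset.mem_erase.mpr ⟨hi, Finset.mem_univ i⟩
    have ht := hterm i hmem
    have hA : 0 ≤ ∑ u, g u i * (δ u - δ i) ^ 2 :=
      Finset.sum_nonneg fun u _ => mul_nonneg (hgnn u i) (sq_nonneg _)
    have hB : 0 ≤ δ i ^ 2 * (qs i + qw i + g i s) :=
      mul_nonneg (sq_nonneg _) (by have := hqs i; have := hqw i; have := hgnn i s; linarith)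
    have hA0 : ∑ u, g u i * (δ u - δ i) ^ 2 = 0 := by linarith
    constructor
    · intro u
      have := (Finset.sum_eq_zero_iff_of_nonneg
        (fun u (_ : u ∈ Finset.univ) => mul_nonneg (hgnn u i) (sq_nonneg (δ u - δ i)))).mp hA0
      exact this u (Finset.mem_univ u)
    · linarith
  -- δ is constant across every edge
  have hadj : ∀ u v, G.Adj u v → δ u = δ v := by
    have hdir : ∀ u v, G.Adj u v → 0 < flow u v → δ u = δ v := by
      intro u v huv hf
      have hguv : 0 < g u v := by rw [hg, if_pos hf]; exact hf
      by_cases hv : v = s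
      · have huv' : G.Adj u s := hv ▸ huv
        have hu : u ≠ s := fun h => G.irrefl (h ▸ huv')
        have hb := (hAB u hu).2
        have hgus : 0 < g u s := hv ▸ hguv
        have hpos : 0 < qs u + qw u + g u s := by
          have := hqs u; have := hqw u; linarith
        have hδu2 : δ u ^ 2 = 0 := by
          rcases mul_eq_zero.mp hb with h | h
          · exact h
          · exact absurd h (ne_of_gt hpos)
        have hδu : δ u = 0 := sq_eq_zero_iff.mp hδu2
        rw [hv, hδu, hδs]
      · have ha := (hAB v hv).1 u
        have hsq : (δ u - δ v) ^ 2 = 0 := by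
          rcases mul_eq_zero.mp ha with h | h
          · exact absurd h (ne_of_gt hguv)
          · exact h
        have := sq_eq_zero_iff.mp hsq
        linarith
    intro u v huv
    rcases (hne u v huv).lt_or_gt with hlt | hgt
    · have h' : 0 < flow v u := by rw [hskew]; linarith
      exact (hdir v u huv.symm h').symm
    · exact hdir u v huv hgt
  -- connectivity: δ vanishes everywhere
  have hwalkeq : ∀ {a b : V} (_ : G.Walk a b), δ a = δ b := by
    intro a b w
    induction w with
    | nil => rfl
    | cons h p ih => exact (hadj _ _ h).trans ih
  have hall : ∀ v, δ v = 0 := by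
    intro v
    obtain ⟨w⟩ := hT.isConnected.preconnected v s
    rw [hwalkeq w, hδs]
  have heq : η1 = η2 := by
    funext i
    have := hall i
    rw [hδ] at this
    linarith
  refine ⟨heq, fun u v _ => ?_⟩
  rw [heq]
end

section
/- For a meshed network with exactly one slack node and no injection nodes, any solution of the heterogeneous gas flow equations has all edge concentrations equal to the slack injection concentration η^s, provided every edge carries nonzero flow and every node is reachable from the slack node along directed flow paths. -/
/-!
Away from the slack node `s`, the concentration `η` is a weighted average of the
concentrations upstream (weights: the positive inflows). At a node where `η` is maximal
such an average forces every upstream neighbour to be maximal too, so walking back along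
a flow path from `s` to a maximiser shows that `η s` is the maximum. Applied to `-η`,
it is also the minimum.
-/

namespace HarmonicOnDigraph

variable {V : Type*} [Fintype V] {w : V → V → ℝ} {η : V → ℝ} {s : V}

theorem eq_of_isMax_of_pos {v u : V} (hw : ∀ u v, 0 ≤ w u v)
    (hv : η v * ∑ u, w u v = ∑ u, η u * w u v) (hmax : ∀ u, η u ≤ η v)
    (hu : 0 < w u v) : η u = η v := by
  have hsum : ∑ x, (η v - η x) * w x v = 0 := by
    simp only [sub_mul, Finset.sum_sub_distrib, ← Finset.mul_sum, hv, sub_self]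
  have hterm := (Finset.sum_eq_zero_iff_of_nonneg fun x _ =>
    mul_nonneg (sub_nonneg.2 (hmax x)) (hw x v)).1 hsum u (Finset.mem_univ u)
  rcases mul_eq_zero.1 hterm with h | h
  · linarith
  · exact absurd h hu.ne'

theorem le_of_reachable (hw : ∀ u v, 0 ≤ w u v)
    (hharm : ∀ v, v ≠ s → η v * ∑ u, w u v = ∑ u, η u * w u v)
    (hreach : ∀ v, Relation.ReflTransGen (fun u v => 0 < w u v) s v) (v : V) :
    η v ≤ η s := by
  obtain ⟨m, -, hm⟩ := Finset.exists_max_image Finset.univ η ⟨s, Finset.mem_univ s⟩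
  have hmax_of_reachable : ∀ t, Relation.ReflTransGen (fun u v => 0 < w u v) s t →
      (∀ u, η u ≤ η t) → η s = η t := by
    intro t hst
    induction hst with
    | refl => exact fun _ => rfl
    | @tail b c _ hbc ih =>
      intro hc
      by_cases hcs : c = s
      · rw [hcs]
      · have hbc_eq : η b = η c := eq_of_isMax_of_pos hw (hharm c hcs) hc hbc
        rw [ih (hbc_eq ▸ hc), hbc_eq]
  rw [hmax_of_reachable m (hreach m) fun u => hm u (Finset.mem_univ u)]
  exact hm v (Finset.mem_univ v)

theorem eq_of_reachable (hw : ∀ u v, 0 ≤ w u v)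
    (hharm : ∀ v, v ≠ s → η v * ∑ u, w u v = ∑ u, η u * w u v)
    (hreach : ∀ v, Relation.ReflTransGen (fun u v => 0 < w u v) s v) (v : V) :
    η v = η s := by
  have hharm_neg : ∀ v, v ≠ s → -η v * ∑ u, w u v = ∑ u, -η u * w u v := by
    intro v hv
    simp only [neg_mul, Finset.sum_neg_distrib, hharm v hv]
  exact le_antisymm (le_of_reachable hw hharm hreach v)
    (neg_le_neg_iff.1 (le_of_reachable (η := fun v => -η v) hw hharm_neg hreach v))

end HarmonicOnDigraph

open HarmonicOnDigraph in
theorem single_source_uniform_concentration_general {V : Type*} [Fintype V]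
    (G : SimpleGraph V) (flow : V → V → ℝ)
    (s : V) (ηs : ℝ) (η : V → ℝ)
    (hreach : ∀ v : V,
      Relation.ReflTransGen (fun u w => G.Adj u w ∧ 0 < flow u w) s v)
    (hslack : η s = ηs)
    (hmix : ∀ i, i ≠ s →
      η i * (∑ u, if 0 < flow u i then flow u i else 0) =
        ∑ u, if 0 < flow u i then η u * flow u i else 0) :
    (∀ v, η v = ηs) ∧
      ∀ u v, G.Adj u v → (if 0 < flow u v then η u else η v) = ηs := by
  set inflow : V → V → ℝ := fun u v => if 0 < flow u v then flow u v else 0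
  have hw : ∀ u v, 0 ≤ inflow u v := fun u v => by
    dsimp only [inflow]
    split_ifs with h
    exacts [h.le, le_rfl]
  have hharm : ∀ v, v ≠ s → η v * ∑ u, inflow u v = ∑ u, η u * inflow u v := by
    intro v hv
    simpa only [inflow, mul_ite, mul_zero] using hmix v hv
  have hreach' : ∀ v, Relation.ReflTransGen (fun u v => 0 < inflow u v) s v :=
    fun v => Relation.ReflTransGen.mono
      (fun a b (hab : G.Adj a b ∧ 0 < flow a b) => by simp [inflow, hab.2]) _ _
      (hreach v)
  have hall : ∀ v, η v = ηs := fun v => hslack ▸ eq_of_reachable hw hharm hreach' v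
  exact ⟨hall, fun u v _ => by split_ifs <;> exact hall _⟩

/-- In a meshed network with a single slack node `s` (the only injection) and
all other nodes withdrawing, if every edge carries nonzero flow and every node
is reachable from `s` along directed flow paths, then every edge concentration
(the mixed concentration of its upstream node) equals the slack injection
concentration `ηs`. -/
theorem single_source_uniform_concentration {V : Type*} [Fintype V]
    (G : SimpleGraph V) (flow : V → V → ℝ)
    (hskew : ∀ u v, flow u v = -flow v u)
    (hsupp : ∀ u v, ¬ G.Adj u v → flow u v = 0)
    (hne : ∀ u v, G.Adj u v → flow u v ≠ 0)
    (s : V) (ηs : ℝ) (η : V → ℝ)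
    (hreach : ∀ v : V,
      Relation.ReflTransGen (fun u w => G.Adj u w ∧ 0 < flow u w) s v)
    (hslack : η s = ηs)
    (hmix : ∀ i, i ≠ s →
      η i * (∑ u, if 0 < flow u i then flow u i else 0) =
        ∑ u, if 0 < flow u i then η u * flow u i else 0) :
    (∀ v, η v = ηs) ∧
      ∀ u v, G.Adj u v → (if 0 < flow u v then η u else η v) = ηs :=
  single_source_uniform_concentration_general G flow s ηs η hreach hslack hmix
end
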